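/- arXiv:2209.03908 — 3 statements merged into one kernel-verified Lean document; each statement's English description precedes it below -/
import Mathlib

section
/- For every pair x, y ∈ [0,1] with x + y < 2, there exists an instance with two agents, two goods, and entitlements summing to 1, such that no lottery over deterministic allocations is simultaneously ex-ante weighted envy-free and supported only on WEF(x,y) allocations. Concretely: with two goods each valued 1 by both agents, and entitlements w₁ ∈ (y/(2+y−x), 1/2), w₂ = 1 − w₁, any ex-ante WEF lottery must place positive probability on the allocation giving both goods to agent 2, and that allocation is not WEF(x,y). -/
open Finset

/-- Bundle of agent `i` under deterministic allocation `A` (good ↦ agent). -/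
def bundle (A : Fin 2 → Fin 2) (i : Fin 2) : Finset (Fin 2) :=
  Finset.univ.filter (fun g => A g = i)

/-- Fractional allocation induced by a lottery `p`: probability that good `g` goes to agent `i`. -/
def fracAlloc (p : (Fin 2 → Fin 2) → ℝ) (i g : Fin 2) : ℝ :=
  ∑ A ∈ Finset.univ.filter (fun A : Fin 2 → Fin 2 => A g = i), p A

/-- Ex-ante weighted envy-freeness of a lottery. -/
def ExAnteWEF (p : (Fin 2 → Fin 2) → ℝ) (w : Fin 2 → ℝ) (v : Fin 2 → Fin 2 → ℝ) : Prop :=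
  ∀ i j : Fin 2,
    (∑ g, fracAlloc p j g * v i g) / w j ≤ (∑ g, fracAlloc p i g * v i g) / w i

/-- WEF(x,y) for a deterministic allocation. -/
def WEFxy (x y : ℝ) (A : Fin 2 → Fin 2) (w : Fin 2 → ℝ) (v : Fin 2 → Fin 2 → ℝ) : Prop :=
  ∀ i j : Fin 2, (bundle A j).Nonempty →
    ∃ g ∈ bundle A j,
      ((∑ g' ∈ bundle A j, v i g') - x * v i g) / w j ≤
      ((∑ g' ∈ bundle A i, v i g') + y * v i g) / w i

/-!
Agents 1 and 2 are the indices `0` and `1`. An ex-ante WEF lottery with identical unit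
valuations must give agent 1 an expected number `2 w₁ < 1` of goods. Every allocation other than
"both goods to agent 2" gives agent 1 at least one good, so that allocation must carry probability
at least `1 - 2 w₁ > 0`. In it, WEF(x,y) for agent 1 would require `(2 - x) / (1 - w₁) ≤ y / w₁`,
which is `w₁ ≤ y / (2 + y - x)`.
-/

lemma sum_fracAlloc_agents (p : (Fin 2 → Fin 2) → ℝ) (g : Fin 2) :
    ∑ i, fracAlloc p i g = ∑ A, p A :=
  Finset.sum_fiberwise _ (fun A => A g) p

lemma sum_fracAlloc_eq_sum_mul_card (p : (Fin 2 → Fin 2) → ℝ) (i : Fin 2) :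
    ∑ g, fracAlloc p i g = ∑ A, p A * #(bundle A i) := by
  simp only [fracAlloc, Finset.sum_filter]
  rw [Finset.sum_comm]
  refine Finset.sum_congr rfl fun A _ => ?_
  rw [← Finset.sum_filter, Finset.sum_const, nsmul_eq_mul, mul_comm]
  rfl

lemma bundle_zero_nonempty {A : Fin 2 → Fin 2} (hA : A ≠ fun _ => 1) : (bundle A 0).Nonempty := by
  obtain ⟨g, hg⟩ : ∃ g, A g = 0 := by
    by_contra! h
    exact hA (funext fun g => Fin.eq_one_of_ne_zero _ (h g))
  exact ⟨g, by simp [bundle, hg]⟩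

lemma one_sub_le_sum_fracAlloc_zero {p : (Fin 2 → Fin 2) → ℝ} (hp0 : ∀ A, 0 ≤ p A)
    (hp1 : ∑ A, p A = 1) : 1 - p (fun _ => 1) ≤ ∑ g, fracAlloc p 0 g := by
  rw [sum_fracAlloc_eq_sum_mul_card, ← hp1, ← Finset.sum_erase_eq_sub (Finset.mem_univ _)]
  calc ∑ A ∈ univ.erase (fun _ => 1), p A
      ≤ ∑ A ∈ univ.erase (fun _ => 1), p A * #(bundle A 0) := by
        refine Finset.sum_le_sum fun A hA => le_mul_of_one_le_right (hp0 A) ?_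
        exact_mod_cast (bundle_zero_nonempty (Finset.ne_of_mem_erase hA)).card_pos
    _ ≤ ∑ A, p A * #(bundle A 0) :=
        Finset.sum_le_sum_of_subset_of_nonneg (Finset.subset_univ _)
          fun A _ _ => mul_nonneg (hp0 A) (Nat.cast_nonneg _)

lemma ExAnteWEF.sum_fracAlloc_div_eq {p : (Fin 2 → Fin 2) → ℝ} {w : Fin 2 → ℝ}
    {v : Fin 2 → Fin 2 → ℝ} (hv : ∀ i g, v i g = 1) (h : ExAnteWEF p w v) (i j : Fin 2) :
    (∑ g, fracAlloc p i g) / w i = (∑ g, fracAlloc p j g) / w j := by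
  simp only [ExAnteWEF, hv, mul_one] at h
  exact le_antisymm (h j i) (h i j)

lemma ExAnteWEF.sum_fracAlloc_zero_eq {p : (Fin 2 → Fin 2) → ℝ} {v : Fin 2 → Fin 2 → ℝ}
    {w1 : ℝ} (hw1 : 0 < w1) (hw1' : w1 < 1) (hv : ∀ i g, v i g = 1) (hp1 : ∑ A, p A = 1)
    (h : ExAnteWEF p ![w1, 1 - w1] v) : ∑ g, fracAlloc p 0 g = 2 * w1 := by
  have hdiv := h.sum_fracAlloc_div_eq hv 0 1
  have htotal : ∑ g, fracAlloc p 0 g + ∑ g, fracAlloc p 1 g = 2 := by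
    rw [← Fin.sum_univ_two (fun i => ∑ g, fracAlloc p i g), Finset.sum_comm]
    simp only [sum_fracAlloc_agents, hp1]
    norm_num
  simp only [Matrix.cons_val_zero, Matrix.cons_val_one] at hdiv
  rw [div_eq_div_iff hw1.ne' (by linarith)] at hdiv
  nlinarith

lemma WEFxy.const_one {x y : ℝ} {w : Fin 2 → ℝ} {v : Fin 2 → Fin 2 → ℝ}
    (hv : ∀ i g, v i g = 1) (h : WEFxy x y (fun _ => 1) w v) : (2 - x) / w 1 ≤ y / w 0 := by
  obtain ⟨g, -, hg⟩ := h 0 1 ⟨0, by simp [bundle]⟩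
  have hb1 : bundle (fun _ => 1) 1 = univ := by simp [bundle]
  have hb0 : bundle (fun _ => 1) 0 = ∅ := by simp [bundle]
  simpa [hb0, hb1, hv, one_add_one_eq_two] using hg

theorem stmt0_general (x y : ℝ) (hy0 : 0 ≤ y)
    (hxy : x + y < 2) (w1 : ℝ) (hw1l : y / (2 + y - x) < w1) (hw1r : w1 < 1 / 2)
    (w : Fin 2 → ℝ) (hw : w = ![w1, 1 - w1])
    (v : Fin 2 → Fin 2 → ℝ) (hv : ∀ i g, v i g = 1)
    (p : (Fin 2 → Fin 2) → ℝ) (hp0 : ∀ A, 0 ≤ p A) (hp1 : ∑ A, p A = 1)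
    (hWEF : ExAnteWEF p w v) :
    0 < p (fun _ => 1) ∧ ¬ WEFxy x y (fun _ => 1) w v := by
  subst hw
  have hden : 0 < 2 + y - x := by linarith
  have hw1 : 0 < w1 := (div_nonneg hy0 hden.le).trans_lt hw1l
  refine ⟨?_, fun hW => ?_⟩
  · have := one_sub_le_sum_fracAlloc_zero hp0 hp1
    rw [hWEF.sum_fracAlloc_zero_eq hw1 (by linarith) hv hp1] at this
    linarith
  · have henvy := hW.const_one hv
    simp only [Matrix.cons_val_zero, Matrix.cons_val_one] at henvy
    rw [div_le_div_iff₀ (by linarith) hw1] at henvy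
    have : w1 ≤ y / (2 + y - x) := by
      rw [le_div_iff₀ hden]
      linarith
    linarith

/-- For x + y < 2, ex-ante WEF is incompatible with ex-post WEF(x,y): any ex-ante WEF lottery
puts positive probability on the allocation giving both goods to agent 2 (index 1),
and that allocation is not WEF(x,y). -/
theorem stmt0 (x y : ℝ) (hx0 : 0 ≤ x) (hx1 : x ≤ 1) (hy0 : 0 ≤ y) (hy1 : y ≤ 1)
    (hxy : x + y < 2) (w1 : ℝ) (hw1l : y / (2 + y - x) < w1) (hw1r : w1 < 1 / 2)
    (w : Fin 2 → ℝ) (hw : w = ![w1, 1 - w1])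
    (v : Fin 2 → Fin 2 → ℝ) (hv : ∀ i g, v i g = 1)
    (p : (Fin 2 → Fin 2) → ℝ) (hp0 : ∀ A, 0 ≤ p A) (hp1 : ∑ A, p A = 1)
    (hWEF : ExAnteWEF p w v) :
    0 < p (fun _ => 1) ∧ ¬ WEFxy x y (fun _ => 1) w v :=
  stmt0_general x y hy0 hxy w1 hw1l hw1r w hw v hv p hp0 hp1 hWEF
end

section
/- Let s: G → ℝ be stopping times for goods in a deterministic allocation Y, where agent i's bundle Y_i = {g₁ⁱ,…,g_{h_i}ⁱ} is sorted by non-increasing v_i and s(g_kⁱ) ∈ ((k−1)/w_i, k/w_i]. Suppose the picking sequence π orders goods by non-decreasing stopping time, with π's h-th pick being the owner of the h-th good. Then for any prefix of π and any agents i,j, if j has picked t_j times and i has picked t_i times within the prefix, then (t_j − 1)/w_j < (t_i + 1)/w_i. -/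
open Finset

/-! Let `x` be the last pick of `j` in the prefix: its stopping time exceeds `(t_j - 1)/w_j`.
If `i` picks again after the prefix, that pick is its `(t_i + 1)`-th and comes after `x`, so by
monotonicity `s x` is at most its stopping time, which is at most `(t_i + 1)/w_i`. Otherwise
`t_i` is `i`'s total count and `s x ≤ m < (t_i + 1)/w_i`. -/

section PrefixCount

variable {ι : Type*} [DecidableEq ι] {m : ℕ} (π : Fin m → ι)

def prefixCount (a : ι) (h : ℕ) : ℕ :=
  #{x : Fin m | (x : ℕ) < h ∧ π x = a}

theorem prefixCount_eq_of_forall_ne {a : ι} {h₁ h₂ : ℕ} (hle : h₁ ≤ h₂)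
    (hne : ∀ x : Fin m, h₁ ≤ x → (x : ℕ) < h₂ → π x ≠ a) :
    prefixCount π a h₂ = prefixCount π a h₁ := by
  unfold prefixCount
  congr 1
  ext x
  simp only [mem_filter, mem_univ, true_and]
  constructor
  · rintro ⟨hx, rfl⟩
    exact ⟨not_le.mp fun h => hne x h hx rfl, rfl⟩
  · rintro ⟨hx, rfl⟩
    exact ⟨by omega, rfl⟩

theorem prefixCount_succ_of_eq {a : ι} {x : Fin m} (hx : π x = a) :
    prefixCount π a (x + 1) = prefixCount π a x + 1 := by
  unfold prefixCount
  have hx_notMem : x ∉ ({y : Fin m | (y : ℕ) < x ∧ π y = a} : Finset _) := by simp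
  rw [← card_insert_of_notMem hx_notMem]
  congr 1
  ext y
  simp only [mem_insert, mem_filter, mem_univ, true_and, Nat.lt_succ_iff_lt_or_eq, Fin.val_inj]
  constructor
  · rintro ⟨hy | rfl, hya⟩
    exacts [Or.inr ⟨hy, hya⟩, Or.inl rfl]
  · rintro (rfl | ⟨hy, hya⟩)
    exacts [⟨Or.inr rfl, hx⟩, ⟨Or.inl hy, hya⟩]

theorem exists_last_lt_of_prefixCount_pos {a : ι} {h : ℕ} (hpos : 0 < prefixCount π a h) :
    ∃ x : Fin m, (x : ℕ) < h ∧ π x = a ∧ prefixCount π a (x + 1) = prefixCount π a h := by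
  have hne : ({x : Fin m | (x : ℕ) < h ∧ π x = a} : Finset _).Nonempty := card_pos.mp hpos
  obtain ⟨hxh, hxa⟩ := (mem_filter.mp (max'_mem _ hne)).2
  refine ⟨_, hxh, hxa, (prefixCount_eq_of_forall_ne π hxh fun y hy hyh hya => ?_).symm⟩
  have := le_max' {x : Fin m | (x : ℕ) < h ∧ π x = a} y (by simp [hyh, hya])
  rw [Fin.le_def] at this
  omega

theorem exists_first_ge_of_exists {a : ι} {h : ℕ} (hex : ∃ x : Fin m, h ≤ x ∧ π x = a) :
    ∃ x : Fin m, h ≤ x ∧ π x = a ∧ prefixCount π a (x + 1) = prefixCount π a h + 1 := by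
  have hne : ({x : Fin m | h ≤ (x : ℕ) ∧ π x = a} : Finset _).Nonempty := by
    simpa [Finset.Nonempty] using hex
  obtain ⟨hxh, hxa⟩ := (mem_filter.mp (min'_mem _ hne)).2
  refine ⟨_, hxh, hxa, ?_⟩
  rw [prefixCount_succ_of_eq π hxa, prefixCount_eq_of_forall_ne π hxh fun y hy hyx hya => ?_]
  have := min'_le {x : Fin m | h ≤ (x : ℕ) ∧ π x = a} y (by simp [hy, hya])
  rw [Fin.le_def] at this
  omega

end PrefixCount

/-- Picking in non-decreasing order of stopping times: for any prefix of the picking sequence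
and any agents `i`, `j` with pick counts `t_i`, `t_j` in the prefix,
`(t_j - 1)/w_j < (t_i + 1)/w_i`. -/
theorem stmt6 {ι : Type*} [DecidableEq ι] (m : ℕ) (w : ι → ℝ) (hw : ∀ a, 0 < w a)
    (π : Fin m → ι) (s : Fin m → ℝ) (hs : Monotone s) (hsm : ∀ h, s h ≤ (m : ℝ))
    (cnt : ι → ℕ → ℕ)
    (hcnt : ∀ a h, cnt a h
      = (Finset.univ.filter (fun h' : Fin m => (h' : ℕ) < h ∧ π h' = a)).card)
    (hbound : ∀ h : Fin m,
      ((cnt (π h) ((h : ℕ) + 1) : ℝ) - 1) / w (π h) < s h ∧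
        s h ≤ (cnt (π h) ((h : ℕ) + 1) : ℝ) / w (π h))
    (hfull : ∀ a : ι, (m : ℝ) < ((cnt a m : ℝ) + 1) / w a) :
    ∀ h : ℕ, h ≤ m → ∀ i j : ι,
      ((cnt j h : ℝ) - 1) / w j < ((cnt i h : ℝ) + 1) / w i := by
  intro h hhm i j
  obtain rfl : cnt = prefixCount π := funext₂ hcnt
  rcases (prefixCount π j h).eq_zero_or_pos with hj0 | hjpos
  · have hneg := div_neg_of_neg_of_pos (neg_one_lt_zero (R := ℝ)) (hw j)
    rw [hj0, Nat.cast_zero, zero_sub]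
    exact hneg.trans_le (div_nonneg (by positivity) (hw i).le)
  obtain ⟨x, hxh, rfl, hx⟩ := exists_last_lt_of_prefixCount_pos π hjpos
  have hlow := (hbound x).1
  rw [hx] at hlow
  by_cases hnext : ∃ y : Fin m, h ≤ y ∧ π y = i
  · obtain ⟨y, hyh, rfl, hy⟩ := exists_first_ge_of_exists π hnext
    have hup := (hbound y).2
    rw [hy, Nat.cast_succ] at hup
    exact hlow.trans_le ((hs (Fin.le_def.mpr (by omega))).trans hup)
  · push Not at hnext
    have hlast := hfull i
    rw [prefixCount_eq_of_forall_ne π hhm fun y hy _ => hnext y hy] at hlast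
    exact hlow.trans ((hsm x).trans_lt hlast)
end

section
/- (Lemma on stopping time bounds.) If g_kⁱ is the k-th most preferred good in agent i's bundle Y_i, with eating time t(g_kⁱ), and stopping time s(g_kⁱ) := min(t(g_kⁱ), k/w_i), and if the decomposition property holds that |Y_i ∩ Eaten(i, (k−1)/w_i)| ≤ k−1, and eating times of i's goods are non-decreasing in k and goods with eating time ≤ (k−1)/w_i are contained in Eaten(i,(k−1)/w_i), then s(g_kⁱ) ∈ ((k−1)/w_i, k/w_i]. -/
open Finset

theorem Fin.lt_apply_of_card_le_of_monotone {α : Type*} [LinearOrder α] {h : ℕ}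
    {f : Fin h → α} (hf : Monotone f) {S : Finset (Fin h)} {τ : α}
    (hS : ∀ b, f b ≤ τ → b ∈ S) {a : Fin h} (hcard : #S ≤ a) : τ < f a := by
  by_contra! hle
  have hsub : Iic a ⊆ S := fun b hb => hS b ((hf (mem_Iic.mp hb)).trans hle)
  have := card_le_card hsub
  rw [Fin.card_Iic] at this
  omega

/-- `gs a` is the `(a + 1)`-th good: `a : Fin h` is zero-based. -/
theorem stmt7_general {G : Type*} [DecidableEq G] (wi : ℝ) (hwi : 0 < wi) (h : ℕ)
    (gs : Fin h → G)
    (t : G → ℝ)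
    (hmono : ∀ a b : Fin h, a ≤ b → t (gs a) ≤ t (gs b))
    (Eaten : ℝ → Finset G)
    (hcontain : ∀ (τ : ℝ) (a : Fin h), t (gs a) ≤ τ → gs a ∈ Eaten τ)
    (hcard : ∀ a : Fin h,
      (Finset.univ.filter (fun b : Fin h => gs b ∈ Eaten (((a : ℕ) : ℝ) / wi))).card
        ≤ (a : ℕ)) :
    ∀ a : Fin h,
      ((a : ℕ) : ℝ) / wi < min (t (gs a)) ((((a : ℕ) : ℝ) + 1) / wi) ∧
      min (t (gs a)) ((((a : ℕ) : ℝ) + 1) / wi) ≤ (((a : ℕ) : ℝ) + 1) / wi := by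
  intro a
  have hlt_eat : ((a : ℕ) : ℝ) / wi < t (gs a) :=
    Fin.lt_apply_of_card_le_of_monotone (f := t ∘ gs) (fun b c => hmono b c)
      (fun b hb => mem_filter.mpr ⟨mem_univ b, hcontain _ b hb⟩) (hcard a)
  have hlt_quota : ((a : ℕ) : ℝ) / wi < (((a : ℕ) : ℝ) + 1) / wi := by gcongr; linarith
  exact ⟨lt_min hlt_eat hlt_quota, min_le_right _ _⟩

/-- Stopping time bounds: the stopping time `min (t g_k) (k / w_i)` of the `k`-th most
preferred good in agent `i`'s bundle lies in the interval `((k-1)/w_i, k/w_i]`.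
Here `gs a` is the `(a+1)`-th good (`a : Fin h` is zero-based). -/
theorem stmt7 {G : Type*} [DecidableEq G] (wi : ℝ) (hwi : 0 < wi) (h : ℕ)
    (gs : Fin h → G) (hinj : Function.Injective gs)
    (t : G → ℝ) (ht : ∀ g, 0 < t g)
    (hmono : ∀ a b : Fin h, a ≤ b → t (gs a) ≤ t (gs b))
    (Eaten : ℝ → Finset G)
    (hcontain : ∀ (τ : ℝ) (a : Fin h), t (gs a) ≤ τ → gs a ∈ Eaten τ)
    (hcard : ∀ a : Fin h,
      (Finset.univ.filter (fun b : Fin h => gs b ∈ Eaten (((a : ℕ) : ℝ) / wi))).card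
        ≤ (a : ℕ)) :
    ∀ a : Fin h,
      ((a : ℕ) : ℝ) / wi < min (t (gs a)) ((((a : ℕ) : ℝ) + 1) / wi) ∧
      min (t (gs a)) ((((a : ℕ) : ℝ) + 1) / wi) ≤ (((a : ℕ) : ℝ) + 1) / wi :=
  stmt7_general wi hwi h gs t hmono Eaten hcontain hcard
end
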